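/- Let y ∈ ℝⁿ, let X = [X_1 … X_N] be an n × Np real matrix partitioned into n × p blocks X_i, let λ > 0, and let â ∈ ℝ^{Np} be partitioned into p-dimensional blocks â_i. Then â minimizes the convex function a ↦ (1/n)‖y − Xa‖₂² + λ Σ_{i=1}^N ‖a_i‖₂ if and only if: X_iᵀ(y − Xâ) = (λn/2) â_i / ‖â_i‖₂ for every i with â_i ≠ 0, and ‖X_iᵀ(y − Xâ)‖₂ ≤ λn/2 for every i with â_i = 0. -/

import Mathlib

/-!
Write `G = Xᵀ(y - Xâ)`. The objective at `â + d` is its value at `â` plus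
`n⁻¹‖Xd‖² - 2n⁻¹⟪G, d⟫ + λ ∑ᵢ (‖âᵢ + dᵢ‖ - ‖âᵢ‖)`. As the penalty is convex and the
quadratic part has first-order term `-2n⁻¹⟪G, d⟫`, minimality of `â` is equivalent to the
blockwise subgradient inequalities `⟪Gᵢ, w⟫ ≤ (λn/2)(‖âᵢ + w‖ - ‖âᵢ‖)` for all `w`.
In an inner product space, `⟪u, w⟫ ≤ c(‖x + w‖ - ‖x‖)` for all `w` holds iff `u = (c/‖x‖) x`
when `x ≠ 0` and `‖u‖ ≤ c` when `x = 0`: testing `w = ±x` gives `⟪u, x⟫ = c‖x‖`, testing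
`w = u` gives `‖u‖ ≤ c`, and together these force equality in Cauchy–Schwarz.
-/

noncomputable section

/-- Euclidean norm of a finitely indexed real vector. -/
def vecNorm {ι : Type*} [Fintype ι] (v : ι → ℝ) : ℝ :=
  Real.sqrt (∑ i, v i ^ 2)

/-- The group lasso objective: coefficient vectors `a : Fin N × Fin p → ℝ` are partitioned into
`N` blocks of size `p`; the objective is `(1/n)‖y − Xa‖₂² + λ ∑ᵢ ‖aᵢ‖₂`. -/
def groupLassoObj {n N p : ℕ} (X : Matrix (Fin n) (Fin N × Fin p) ℝ) (y : Fin n → ℝ)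
    (lam : ℝ) (a : Fin N × Fin p → ℝ) : ℝ :=
  (n : ℝ)⁻¹ * ∑ t, (y t - X.mulVec a t) ^ 2 + lam * ∑ i : Fin N, vecNorm (fun r => a (i, r))

open RealInnerProductSpace Set Filter Topology Matrix

section NormSubgradient

variable {F : Type*} [NormedAddCommGroup F] [InnerProductSpace ℝ F]

theorem norm_le_of_forall_inner_le_mul_norm_add_sub {g x : F} {c : ℝ} (hc : 0 ≤ c)
    (h : ∀ v, ⟪g, v⟫ ≤ c * (‖x + v‖ - ‖x‖)) : ‖g‖ ≤ c := by
  have hg : ‖g‖ * ‖g‖ ≤ c * ‖g‖ := by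
    calc ‖g‖ * ‖g‖ = ⟪g, g⟫ := (real_inner_self_eq_norm_mul_norm g).symm
      _ ≤ c * (‖x + g‖ - ‖x‖) := h g
      _ ≤ c * ‖g‖ := by gcongr; linarith [norm_add_le x g]
  rcases (norm_nonneg g).eq_or_lt with hg0 | hgpos
  · rw [← hg0]; exact hc
  · exact le_of_mul_le_mul_right hg hgpos

theorem eq_smul_of_forall_inner_le_mul_norm_add_sub {g x : F} {c : ℝ} (hc : 0 ≤ c) (hx : x ≠ 0)
    (h : ∀ v, ⟪g, v⟫ ≤ c * (‖x + v‖ - ‖x‖)) : g = (c / ‖x‖) • x := by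
  have hxpos : 0 < ‖x‖ := norm_pos_iff.2 hx
  have hgx : ⟪g, x⟫ = c * ‖x‖ := by
    have hle : ⟪g, x⟫ ≤ c * ‖x‖ :=
      (h x).trans (by gcongr; linarith [norm_add_le x x])
    have hge := h (-x)
    rw [inner_neg_right, add_neg_cancel, norm_zero] at hge
    linarith
  have hg := norm_le_of_forall_inner_le_mul_norm_add_sub hc h
  have hdist : ‖g - (c / ‖x‖) • x‖ ^ 2 = ‖g‖ ^ 2 - c ^ 2 := by
    rw [norm_sub_sq_real, real_inner_smul_right, hgx, norm_smul,
      Real.norm_of_nonneg (by positivity)]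
    field_simp
    ring
  have : ‖g - (c / ‖x‖) • x‖ ^ 2 ≤ 0 := by rw [hdist]; nlinarith [norm_nonneg g]
  exact sub_eq_zero.1 <| norm_eq_zero.1 <|
    (pow_eq_zero_iff two_ne_zero).1 (le_antisymm this (sq_nonneg _))

theorem inner_div_norm_smul_le_mul_norm_add_sub {x v : F} {c : ℝ} (hc : 0 ≤ c) :
    ⟪(c / ‖x‖) • x, v⟫ ≤ c * (‖x + v‖ - ‖x‖) := by
  rcases eq_or_ne x 0 with rfl | hx
  · simpa using mul_nonneg hc (norm_nonneg v)
  have hxpos : 0 < ‖x‖ := norm_pos_iff.2 hx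
  have hcs : ⟪x, x + v⟫ ≤ ‖x‖ * ‖x + v‖ := real_inner_le_norm x (x + v)
  rw [inner_add_right, real_inner_self_eq_norm_sq] at hcs
  rw [real_inner_smul_left, div_mul_eq_mul_div, div_le_iff₀ hxpos]
  nlinarith

theorem forall_inner_le_mul_norm_add_sub_iff {g x : F} {c : ℝ} (hc : 0 ≤ c) :
    (∀ v, ⟪g, v⟫ ≤ c * (‖x + v‖ - ‖x‖)) ↔ (x ≠ 0 → g = (c / ‖x‖) • x) ∧ (x = 0 → ‖g‖ ≤ c) := by
  refine ⟨fun h => ⟨fun hx => eq_smul_of_forall_inner_le_mul_norm_add_sub hc hx h,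
    fun _ => norm_le_of_forall_inner_le_mul_norm_add_sub hc h⟩, fun ⟨hne, hzero⟩ v => ?_⟩
  rcases eq_or_ne x 0 with rfl | hx
  · simpa using (real_inner_le_norm g v).trans (by gcongr; exact hzero rfl)
  · rw [hne hx]
    exact inner_div_norm_smul_le_mul_norm_add_sub hc

end NormSubgradient

theorem ConvexOn.neg_le_sub_of_forall_add_le_add {E : Type*} [AddCommGroup E] [Module ℝ E]
    {f g : E → ℝ} {x v : E} {ℓ q : ℝ} (hg : ConvexOn ℝ univ g)
    (hf : ∀ t : ℝ, f (x + t • v) = f x + t * ℓ + t ^ 2 * q) (hmin : ∀ z, f x + g x ≤ f z + g z) :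
    -ℓ ≤ g (x + v) - g x := by
  have hsmall : ∀ t ∈ Ioc (0 : ℝ) 1, -ℓ - (g (x + v) - g x) ≤ t * q := by
    rintro t ⟨ht0, ht1⟩
    have hseg : g (x + t • v) ≤ (1 - t) * g x + t * g (x + v) := by
      have := hg.2 (mem_univ x) (mem_univ (x + v)) (sub_nonneg.2 ht1) ht0.le (by ring)
      rwa [smul_add, ← add_assoc, ← add_smul, sub_add_cancel, one_smul, smul_eq_mul,
        smul_eq_mul] at this
    have hz := hmin (x + t • v)
    rw [hf t] at hz
    refine le_of_mul_le_mul_left ?_ ht0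
    nlinarith
  have hlim : Tendsto (fun t : ℝ => t * q) (𝓝[>] 0) (𝓝 0) :=
    ((continuous_mul_const q).tendsto' 0 0 (zero_mul q)).mono_left nhdsWithin_le_nhds
  have := ge_of_tendsto hlim (eventually_of_mem (Ioc_mem_nhdsGT one_pos) hsmall)
  linarith

section VecNorm

variable {ι : Type*} [Fintype ι]

theorem vecNorm_eq_norm_toLp (v : ι → ℝ) : vecNorm v = ‖WithLp.toLp 2 v‖ := by
  simp [vecNorm, EuclideanSpace.norm_eq]

theorem convexOn_vecNorm : ConvexOn ℝ univ (vecNorm : (ι → ℝ) → ℝ) := by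
  have := (convexOn_norm convex_univ).comp_linearMap
    (WithLp.linearEquiv 2 ℝ (ι → ℝ)).symm.toLinearMap
  simpa [Function.comp_def, ← vecNorm_eq_norm_toLp] using this

theorem forall_sum_mul_le_mul_vecNorm_add_sub_iff {g x : ι → ℝ} {c : ℝ} (hc : 0 ≤ c) :
    (∀ w, ∑ r, g r * w r ≤ c * (vecNorm (x + w) - vecNorm x)) ↔
      (x ≠ 0 → ∀ r, g r = c * (x r / vecNorm x)) ∧ (x = 0 → vecNorm g ≤ c) := by
  have hinner : ∀ w, ∑ r, g r * w r = ⟪WithLp.toLp 2 g, WithLp.toLp 2 w⟫ := fun w => by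
    simp [PiLp.inner_apply, mul_comm]
  simp only [hinner, vecNorm_eq_norm_toLp, WithLp.toLp_add]
  refine ((WithLp.equiv 2 (ι → ℝ)).symm.forall_congr_right
    (q := fun w => ⟪WithLp.toLp 2 g, w⟫ ≤ c * (‖WithLp.toLp 2 x + w‖ - ‖WithLp.toLp 2 x‖))).trans
    ((forall_inner_le_mul_norm_add_sub_iff hc).trans ?_)
  have hsmul : WithLp.toLp 2 g = (c / ‖WithLp.toLp 2 x‖) • WithLp.toLp 2 x ↔
      ∀ r, g r = c * (x r / ‖WithLp.toLp 2 x‖) := by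
    rw [← WithLp.toLp_smul, (WithLp.toLp_injective 2).eq_iff, funext_iff]
    simp only [Pi.smul_apply, smul_eq_mul, div_mul_eq_mul_div, mul_div_assoc]
  simp only [ne_eq, WithLp.toLp_eq_zero, hsmul]

end VecNorm

theorem sum_sq_sub_mulVec_add_smul {m k : Type*} [Fintype m] [Fintype k] (X : Matrix m k ℝ)
    (y : m → ℝ) (a v : k → ℝ) (t : ℝ) :
    ∑ s, (y s - (X *ᵥ (a + t • v)) s) ^ 2 =
      ∑ s, (y s - (X *ᵥ a) s) ^ 2 + t * (-2 * ((y - X *ᵥ a) ᵥ* X) ⬝ᵥ v) +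
        t ^ 2 * ∑ s, (X *ᵥ v) s ^ 2 := by
  rw [mulVec_add, mulVec_smul, ← dotProduct_mulVec, dotProduct, Finset.mul_sum, Finset.mul_sum,
    Finset.mul_sum, ← Finset.sum_add_distrib, ← Finset.sum_add_distrib]
  refine Finset.sum_congr rfl fun s _ => ?_
  simp only [Pi.add_apply, Pi.smul_apply, Pi.sub_apply, smul_eq_mul]
  ring

theorem vecMul_sub_mulVec_apply {m k : Type*} [Fintype m] [Fintype k] (X : Matrix m k ℝ)
    (y : m → ℝ) (a : k → ℝ) (j : k) :
    ((y - X *ᵥ a) ᵥ* X) j = ∑ t, X t j * (y t - (X *ᵥ a) t) := by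
  simp [vecMul, dotProduct, mul_comm]

section Blocks

variable {ι κ : Type*} [Fintype ι] [Fintype κ]

theorem convexOn_sum_vecNorm_block :
    ConvexOn ℝ univ fun a : ι × κ → ℝ => ∑ i, vecNorm fun r => a (i, r) := by
  have hblock (i : ι) : ConvexOn ℝ univ fun a : ι × κ → ℝ => vecNorm fun r => a (i, r) :=
    convexOn_vecNorm.comp_linearMap (LinearMap.funLeft ℝ ℝ (Prod.mk i))
  have := Finset.sum_induction (s := Finset.univ)
    (fun i (a : ι × κ → ℝ) => vecNorm fun r => a (i, r)) (ConvexOn ℝ univ) (fun _ _ => ConvexOn.add)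
    (convexOn_const 0 convex_univ) (fun i _ => hblock i)
  simpa [Finset.sum_fn] using this

variable [DecidableEq ι]

theorem dotProduct_uncurry_single (G : ι × κ → ℝ) (i : ι) (w : κ → ℝ) :
    G ⬝ᵥ Function.uncurry (Pi.single i w) = ∑ r, G (i, r) * w r := by
  rw [dotProduct, Fintype.sum_prod_type, Finset.sum_eq_single i]
  · simp
  · intro j _ hj
    simp [hj]
  · simp

theorem sum_vecNorm_block_add_uncurry_single (a : ι × κ → ℝ) (i : ι) (w : κ → ℝ) :
    ∑ j, vecNorm (fun r => (a + Function.uncurry (Pi.single i w)) (j, r)) =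
      ∑ j, vecNorm (fun r => a (j, r)) +
        (vecNorm ((fun r => a (i, r)) + w) - vecNorm fun r => a (i, r)) := by
  rw [← sub_eq_iff_eq_add', ← Finset.sum_sub_distrib, Finset.sum_eq_single i]
  · simp only [Pi.add_apply, Function.uncurry_apply_pair, Pi.single_eq_same]
    rfl
  · intro j _ hj
    simp [hj]
  · simp

end Blocks

section GroupLasso

variable {n N p : ℕ} {X : Matrix (Fin n) (Fin N × Fin p) ℝ} {y : Fin n → ℝ} {lam : ℝ}
  {ahat : Fin N × Fin p → ℝ}

theorem sum_mul_le_of_groupLasso_isMin (hn : 0 < n) (hlam : 0 ≤ lam)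
    (hmin : ∀ a, groupLassoObj X y lam ahat ≤ groupLassoObj X y lam a)
    (i : Fin N) (w : Fin p → ℝ) :
    ∑ r, ((y - X *ᵥ ahat) ᵥ* X) (i, r) * w r ≤
      lam * n / 2 * (vecNorm ((fun r => ahat (i, r)) + w) - vecNorm fun r => ahat (i, r)) := by
  set v := Function.uncurry (Pi.single i w)
  have := (convexOn_sum_vecNorm_block.smul hlam).neg_le_sub_of_forall_add_le_add
    (f := fun a => (n : ℝ)⁻¹ * ∑ t, (y t - (X *ᵥ a) t) ^ 2) (x := ahat) (v := v)
    (ℓ := (n : ℝ)⁻¹ * (-2 * ((y - X *ᵥ ahat) ᵥ* X) ⬝ᵥ v))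
    (q := (n : ℝ)⁻¹ * ∑ t, (X *ᵥ v) t ^ 2)
    (fun t => by simp only [sum_sq_sub_mulVec_add_smul]; ring) hmin
  rw [smul_eq_mul, smul_eq_mul, sum_vecNorm_block_add_uncurry_single, dotProduct_uncurry_single]
    at this
  have hn' : (0 : ℝ) < n := Nat.cast_pos.2 hn
  field_simp at this ⊢
  linarith

theorem groupLassoObj_le_of_forall_sum_mul_le (hn : 0 < n)
    (h : ∀ (i : Fin N) (w : Fin p → ℝ), ∑ r, ((y - X *ᵥ ahat) ᵥ* X) (i, r) * w r ≤
      lam * n / 2 * (vecNorm ((fun r => ahat (i, r)) + w) - vecNorm fun r => ahat (i, r)))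
    (a : Fin N × Fin p → ℝ) : groupLassoObj X y lam ahat ≤ groupLassoObj X y lam a := by
  set d := a - ahat
  have hexp := sum_sq_sub_mulVec_add_smul X y ahat d 1
  rw [one_smul, add_sub_cancel] at hexp
  have hlin : ((y - X *ᵥ ahat) ᵥ* X) ⬝ᵥ d ≤
      lam * n / 2 * ∑ i, ((vecNorm fun r => a (i, r)) - vecNorm fun r => ahat (i, r)) := by
    rw [dotProduct, Fintype.sum_prod_type, Finset.mul_sum]
    refine Finset.sum_le_sum fun i _ => ?_
    have hi := h i fun r => d (i, r)
    rwa [show ((fun r => ahat (i, r)) + fun r => d (i, r)) = fun r => a (i, r) from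
      funext fun r => add_sub_cancel _ _] at hi
  have hquad : 0 ≤ ∑ t, (X *ᵥ d) t ^ 2 := Finset.sum_nonneg fun _ _ => sq_nonneg _
  have hn' : (0 : ℝ) < n := Nat.cast_pos.2 hn
  rw [Finset.sum_sub_distrib] at hlin
  unfold groupLassoObj
  rw [hexp]
  field_simp at hlin ⊢
  nlinarith

theorem groupLasso_isMin_iff_forall_sum_mul_le (hn : 0 < n) (hlam : 0 ≤ lam) :
    (∀ a, groupLassoObj X y lam ahat ≤ groupLassoObj X y lam a) ↔
      ∀ (i : Fin N) (w : Fin p → ℝ), ∑ r, ((y - X *ᵥ ahat) ᵥ* X) (i, r) * w r ≤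
        lam * n / 2 * (vecNorm ((fun r => ahat (i, r)) + w) - vecNorm fun r => ahat (i, r)) :=
  ⟨sum_mul_le_of_groupLasso_isMin hn hlam, groupLassoObj_le_of_forall_sum_mul_le hn⟩

end GroupLasso

/-- the Karush–Kuhn–Tucker (subgradient) conditions characterize the
minimizers of the group lasso objective: `â` is a minimizer iff
`Xᵢᵀ(y − Xâ) = (λn/2) âᵢ/‖âᵢ‖₂` for every block `i` with `âᵢ ≠ 0`, and
`‖Xᵢᵀ(y − Xâ)‖₂ ≤ λn/2` for every block `i` with `âᵢ = 0`. -/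
theorem groupLasso_isMin_iff_kkt {n N p : ℕ} (hn : 0 < n)
    (X : Matrix (Fin n) (Fin N × Fin p) ℝ) (y : Fin n → ℝ) (lam : ℝ) (hlam : 0 < lam)
    (ahat : Fin N × Fin p → ℝ) :
    (∀ a, groupLassoObj X y lam ahat ≤ groupLassoObj X y lam a) ↔
      ((∀ i : Fin N, (fun r => ahat (i, r)) ≠ 0 →
          ∀ r, (∑ t, X t (i, r) * (y t - X.mulVec ahat t)) =
            lam * n / 2 * (ahat (i, r) / vecNorm (fun s => ahat (i, s)))) ∧
        (∀ i : Fin N, (fun r => ahat (i, r)) = 0 →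
          vecNorm (fun r => ∑ t, X t (i, r) * (y t - X.mulVec ahat t)) ≤ lam * n / 2)) := by
  have hc : 0 ≤ lam * n / 2 := by positivity
  rw [groupLasso_isMin_iff_forall_sum_mul_le hn hlam.le, ← forall_and]
  refine forall_congr' fun i => ?_
  simpa only [vecMul_sub_mulVec_apply] using forall_sum_mul_le_mul_vecNorm_add_sub_iff hc
    (g := fun r => ((y - X *ᵥ ahat) ᵥ* X) (i, r)) (x := fun r => ahat (i, r))

end
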